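/- Identification of the ATTE via its score: E[ Dζ/m − m₀(Z)(1−D)ζ₀/((1−m₀(Z)) m) − θ₀ D/m ] = 0, where ζ₀ = Y − g₀(0,Z), m = E[D], and θ₀ = E[g₀(1,Z) − g₀(0,Z) ∣ D = 1]. -/

import Mathlib

/-!
Write `ζ = Y − (D g₁(Z) + (1 − D) g₀(Z))`. Every weight that is a function of `(D, Z)` is
orthogonal to `ζ`, because `E[ζ ∣ D, Z] = 0`. With the weight `D`, and `D² = D`, this gives
`E[D(Y − g₀(Z))] = E[D(g₁(Z) − g₀(Z))] = m θ₀`; with the weight `m₀(Z)(1 − D)/(1 − m₀(Z))`, and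
`(1 − D) D = 0`, it makes the control term of the score vanish. The score then integrates to
`θ₀ − θ₀ · m/m = 0`.
-/

open MeasureTheory ProbabilityTheory

theorem integral_mul_eq_zero_of_condExp_eq_zero {Ω : Type*} {m mΩ : MeasurableSpace Ω}
    {μ : Measure[mΩ] Ω} (hm : m ≤ mΩ) [SigmaFinite (μ.trim hm)] {f ζ : Ω → ℝ}
    (hf : StronglyMeasurable[m] f) (hζ : μ[ζ | m] =ᵐ[μ] 0) (hζint : Integrable ζ μ)
    (hfζ : Integrable (f * ζ) μ) :
    ∫ ω, f ω * ζ ω ∂μ = 0 := by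
  have hpull : μ[f * ζ | m] =ᵐ[μ] 0 := by
    filter_upwards [condExp_mul_of_stronglyMeasurable_left hf hfζ hζint, hζ] with ω h h'
    simp [h, h']
  calc ∫ ω, f ω * ζ ω ∂μ = ∫ ω, (μ[f * ζ | m]) ω ∂μ := (integral_condExp hm).symm
    _ = 0 := by simp [integral_congr_ae hpull]

section ATTE

variable {Ω 𝓩 : Type*} [MeasurableSpace Ω] {μ : Measure Ω} {Y D : Ω → ℝ} {Z : Ω → 𝓩}
  {g0 g1 : 𝓩 → ℝ}

theorem integrable_residual (hY : Integrable Y μ) (hg0 : Integrable (fun ω => g0 (Z ω)) μ)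
    (hintθ : Integrable (fun ω => D ω * (g1 (Z ω) - g0 (Z ω))) μ) :
    Integrable (fun ω => Y ω - (D ω * g1 (Z ω) + (1 - D ω) * g0 (Z ω))) μ :=
  ((hY.sub' hg0).sub' hintθ).congr (ae_of_all _ fun ω => by ring)

variable [MeasurableSpace 𝓩] [IsFiniteMeasure μ] (hD : Measurable D) (hZ : Measurable Z)
  (hζ : μ[fun ω => Y ω - (D ω * g1 (Z ω) + (1 - D ω) * g0 (Z ω)) |
      MeasurableSpace.comap (fun ω => (D ω, Z ω)) inferInstance] =ᵐ[μ] 0)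
  (hζint : Integrable (fun ω => Y ω - (D ω * g1 (Z ω) + (1 - D ω) * g0 (Z ω))) μ)
include hD hZ hζ hζint

theorem integral_comp_mul_residual_eq_zero {h : ℝ × 𝓩 → ℝ} (hh : Measurable h)
    (hint : Integrable
      (fun ω => h (D ω, Z ω) * (Y ω - (D ω * g1 (Z ω) + (1 - D ω) * g0 (Z ω)))) μ) :
    ∫ ω, h (D ω, Z ω) * (Y ω - (D ω * g1 (Z ω) + (1 - D ω) * g0 (Z ω))) ∂μ = 0 :=
  integral_mul_eq_zero_of_condExp_eq_zero (measurable_iff_comap_le.mp (hD.prodMk hZ))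
    (hh.comp (comap_measurable _)).stronglyMeasurable hζ hζint hint

variable (hDbin : ∀ ω, D ω = 0 ∨ D ω = 1)
include hDbin

theorem integral_treated_eq
    (hint1 : Integrable (fun ω => D ω * (Y ω - g0 (Z ω))) μ)
    (hintθ : Integrable (fun ω => D ω * (g1 (Z ω) - g0 (Z ω))) μ) :
    ∫ ω, D ω * (Y ω - g0 (Z ω)) ∂μ = ∫ ω, D ω * (g1 (Z ω) - g0 (Z ω)) ∂μ := by
  have hweight : ∀ ω, D ω * (Y ω - (D ω * g1 (Z ω) + (1 - D ω) * g0 (Z ω)))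
      = D ω * (Y ω - g0 (Z ω)) - D ω * (g1 (Z ω) - g0 (Z ω)) := by
    intro ω
    rcases hDbin ω with h | h <;> simp only [h] <;> ring
  have horth := integral_comp_mul_residual_eq_zero (h := Prod.fst) hD hZ hζ hζint
    measurable_fst (by simpa only [hweight] using hint1.sub' hintθ)
  simp only [hweight] at horth
  rwa [integral_sub hint1 hintθ, sub_eq_zero] at horth

theorem integral_control_eq_zero {m0 : 𝓩 → ℝ} (hm0 : Measurable m0)
    (hint0 : Integrable (fun ω =>
      m0 (Z ω) * (1 - D ω) * (Y ω - g0 (Z ω)) / (1 - m0 (Z ω))) μ) :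
    ∫ ω, m0 (Z ω) * (1 - D ω) * (Y ω - g0 (Z ω)) / (1 - m0 (Z ω)) ∂μ = 0 := by
  have hweight : ∀ ω, m0 (Z ω) * (1 - D ω) / (1 - m0 (Z ω))
        * (Y ω - (D ω * g1 (Z ω) + (1 - D ω) * g0 (Z ω)))
      = m0 (Z ω) * (1 - D ω) * (Y ω - g0 (Z ω)) / (1 - m0 (Z ω)) := by
    intro ω
    rcases hDbin ω with h | h <;> simp only [h] <;> ring
  have hh : Measurable fun p : ℝ × 𝓩 => m0 p.2 * (1 - p.1) / (1 - m0 p.2) := by fun_prop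
  have horth := integral_comp_mul_residual_eq_zero hD hZ hζ hζint hh
    (by simpa only [hweight] using hint0)
  simpa only [hweight] using horth

end ATTE

theorem statement14_general {Ω 𝓩 : Type*} [MeasurableSpace Ω] [MeasurableSpace 𝓩]
    (μ : Measure Ω) [IsProbabilityMeasure μ]
    (Y D : Ω → ℝ) (Z : Ω → 𝓩) (g0 g1 m0 : 𝓩 → ℝ)
    (hD : Measurable D) (hZ : Measurable Z)
    (hm0 : Measurable m0)
    (hDbin : ∀ ω, D ω = 0 ∨ D ω = 1)
    -- `Y = g₀(D,Z) + ζ` with `E[ζ ∣ D, Z] = 0`: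
    (hζ : μ[fun ω => Y ω - (D ω * g1 (Z ω) + (1 - D ω) * g0 (Z ω)) |
        MeasurableSpace.comap (fun ω => (D ω, Z ω)) inferInstance] =ᵐ[μ] 0)
    -- `m = E[D] ∈ (0,1)`:
    (hD1 : Integrable D μ) (hmpos : 0 < ∫ ω, D ω ∂μ)
    -- moments:
    (hYL2 : MemLp Y 2 μ) (hg0L2 : MemLp (fun ω => g0 (Z ω)) 2 μ)
    (hintθ : Integrable (fun ω => D ω * (g1 (Z ω) - g0 (Z ω))) μ)
    (hint1 : Integrable (fun ω => D ω * (Y ω - g0 (Z ω))) μ)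
    (hint0 : Integrable (fun ω =>
        m0 (Z ω) * (1 - D ω) * (Y ω - g0 (Z ω)) / (1 - m0 (Z ω))) μ) :
    ∫ ω, (D ω * (Y ω - g0 (Z ω)) / (∫ ω', D ω' ∂μ)
        - m0 (Z ω) * (1 - D ω) * (Y ω - g0 (Z ω)) / ((1 - m0 (Z ω)) * (∫ ω', D ω' ∂μ))
        - ((∫ ω', D ω' * (g1 (Z ω') - g0 (Z ω')) ∂μ) / (∫ ω', D ω' ∂μ))
          * (D ω / (∫ ω', D ω' ∂μ))) ∂μ = 0 := by
  set m := ∫ ω, D ω ∂μ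
  have hζint := integrable_residual (hYL2.integrable one_le_two)
    (hg0L2.integrable one_le_two) hintθ
  have htreated := integral_treated_eq hD hZ hζ hζint hDbin hint1 hintθ
  have hcontrol := integral_control_eq_zero hD hZ hζ hζint hDbin hm0 hint0
  simp only [div_mul_eq_div_div _ _ m]
  rw [integral_sub ((hint1.div_const m).sub' (hint0.div_const m))
      ((hD1.div_const m).const_mul _),
    integral_sub (hint1.div_const m) (hint0.div_const m), integral_const_mul,
    integral_div, integral_div, integral_div, htreated, hcontrol]
  field_simp
  ring

/-- Identification of the ATTE via its Neyman-orthogonal score: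
`E[Dζ₀/m − m₀(Z)(1−D)ζ₀/((1−m₀(Z))m) − θ₀ D/m] = 0` where `ζ₀ = Y − g₀(0,Z)`,
`m = E[D]` and `θ₀ = E[g₀(1,Z) − g₀(0,Z) ∣ D = 1] = E[D(g₀(1,Z) − g₀(0,Z))]/m`. -/
theorem statement14 {Ω 𝓩 : Type*} [MeasurableSpace Ω] [MeasurableSpace 𝓩]
    (μ : Measure Ω) [IsProbabilityMeasure μ]
    (Y D : Ω → ℝ) (Z : Ω → 𝓩) (g0 g1 m0 : 𝓩 → ℝ) (ε : ℝ) (hε : 0 < ε)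
    (hY : Measurable Y) (hD : Measurable D) (hZ : Measurable Z)
    (hg0 : Measurable g0) (hg1 : Measurable g1) (hm0 : Measurable m0)
    (hDbin : ∀ ω, D ω = 0 ∨ D ω = 1)
    -- `Y = g₀(D,Z) + ζ` with `E[ζ ∣ D, Z] = 0`:
    (hζ : μ[fun ω => Y ω - (D ω * g1 (Z ω) + (1 - D ω) * g0 (Z ω)) |
        MeasurableSpace.comap (fun ω => (D ω, Z ω)) inferInstance] =ᵐ[μ] 0)
    -- `m₀(Z) = E[D ∣ Z]` with `ε ≤ m₀(Z) ≤ 1 − ε` a.s.: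
    (hm : μ[D | MeasurableSpace.comap Z inferInstance] =ᵐ[μ] fun ω => m0 (Z ω))
    (hover : ∀ᵐ ω ∂μ, ε ≤ m0 (Z ω) ∧ m0 (Z ω) ≤ 1 - ε)
    -- `m = E[D] ∈ (0,1)`:
    (hD1 : Integrable D μ) (hmpos : 0 < ∫ ω, D ω ∂μ) (hmlt1 : (∫ ω, D ω ∂μ) < 1)
    -- moments:
    (hYL2 : MemLp Y 2 μ) (hg0L2 : MemLp (fun ω => g0 (Z ω)) 2 μ)
    (hg1L2 : MemLp (fun ω => g1 (Z ω)) 2 μ)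
    (hintθ : Integrable (fun ω => D ω * (g1 (Z ω) - g0 (Z ω))) μ)
    (hint1 : Integrable (fun ω => D ω * (Y ω - g0 (Z ω))) μ)
    (hint0 : Integrable (fun ω =>
        m0 (Z ω) * (1 - D ω) * (Y ω - g0 (Z ω)) / (1 - m0 (Z ω))) μ) :
    ∫ ω, (D ω * (Y ω - g0 (Z ω)) / (∫ ω', D ω' ∂μ)
        - m0 (Z ω) * (1 - D ω) * (Y ω - g0 (Z ω)) / ((1 - m0 (Z ω)) * (∫ ω', D ω' ∂μ))
        - ((∫ ω', D ω' * (g1 (Z ω') - g0 (Z ω')) ∂μ) / (∫ ω', D ω' ∂μ))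
          * (D ω / (∫ ω', D ω' ∂μ))) ∂μ = 0 :=
  statement14_general μ Y D Z g0 g1 m0 hD hZ hm0 hDbin hζ hD1 hmpos hYL2 hg0L2 hintθ hint1 hint0
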